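/- The element r = E⊗N + N⊗E - 2Ψ⁺⊗Ψ⁻ of gl(1|1)⊗gl(1|1) satisfies the classical Yang–Baxter equation [r¹²,r¹³] + [r¹²,r²³] + [r¹³,r²³] = 0, where brackets and tensor leg embeddings are taken in the graded (super) sense. -/

import Mathlib

open Matrix

noncomputable section

/-- The generators `E, N, Ψ⁺, Ψ⁻` of `gl(1|1)` in the defining representation
on `ℝ^{1|1}`, where the basis vector `e₀` is even and `e₁` is odd. -/
def Em : Matrix (Fin 2) (Fin 2) ℝ := !![1, 0; 0, 1]
def Nm : Matrix (Fin 2) (Fin 2) ℝ := !![(1:ℝ)/2, 0; 0, -(1/2)]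
def Pp : Matrix (Fin 2) (Fin 2) ℝ := !![0, 1; 0, 0]
def Pm : Matrix (Fin 2) (Fin 2) ℝ := !![0, 0; 1, 0]

/-- The operator `X⊗Y⊗1` on `(ℝ^{1|1})^{⊗3}` with the Koszul sign
`(-1)^{|Y||u|}` for `Y` of parity `q` passing the first tensor factor. -/
def leg12 (X Y : Matrix (Fin 2) (Fin 2) ℝ) (q : ℕ) :
    Matrix (Fin 2 × Fin 2 × Fin 2) (Fin 2 × Fin 2 × Fin 2) ℝ :=
  Matrix.of fun u v =>
    (-1 : ℝ) ^ (q * (v.1 : ℕ)) * X u.1 v.1 * Y u.2.1 v.2.1 *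
      (if u.2.2 = v.2.2 then 1 else 0)

/-- The operator `X⊗1⊗Y` with the Koszul sign `(-1)^{|Y|(|u|+|v|)}`. -/
def leg13 (X Y : Matrix (Fin 2) (Fin 2) ℝ) (q : ℕ) :
    Matrix (Fin 2 × Fin 2 × Fin 2) (Fin 2 × Fin 2 × Fin 2) ℝ :=
  Matrix.of fun u v =>
    (-1 : ℝ) ^ (q * ((v.1 : ℕ) + (v.2.1 : ℕ))) * X u.1 v.1 *
      (if u.2.1 = v.2.1 then 1 else 0) * Y u.2.2 v.2.2

/-- The operator `1⊗X⊗Y` with the Koszul signs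
`(-1)^{|X||u| + |Y|(|u|+|v|)}`. -/
def leg23 (X Y : Matrix (Fin 2) (Fin 2) ℝ) (p q : ℕ) :
    Matrix (Fin 2 × Fin 2 × Fin 2) (Fin 2 × Fin 2 × Fin 2) ℝ :=
  Matrix.of fun u v =>
    (-1 : ℝ) ^ (p * (v.1 : ℕ) + q * ((v.1 : ℕ) + (v.2.1 : ℕ))) *
      (if u.1 = v.1 then 1 else 0) * X u.2.1 v.2.1 * Y u.2.2 v.2.2

/-- The three tensor-leg embeddings of `r = E⊗N + N⊗E - 2Ψ⁺⊗Ψ⁻`. -/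
def r12 : Matrix (Fin 2 × Fin 2 × Fin 2) (Fin 2 × Fin 2 × Fin 2) ℝ :=
  leg12 Em Nm 0 + leg12 Nm Em 0 - (2 : ℝ) • leg12 Pp Pm 1
def r13 : Matrix (Fin 2 × Fin 2 × Fin 2) (Fin 2 × Fin 2 × Fin 2) ℝ :=
  leg13 Em Nm 0 + leg13 Nm Em 0 - (2 : ℝ) • leg13 Pp Pm 1
def r23 : Matrix (Fin 2 × Fin 2 × Fin 2) (Fin 2 × Fin 2 × Fin 2) ℝ :=
  leg23 Em Nm 0 0 + leg23 Nm Em 0 0 - (2 : ℝ) • leg23 Pp Pm 1 1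


/-!
Since `E` acts as the identity, `r¹² = N₁ + N₂ - 2ψ₁₂`, `r¹³ = N₁ + N₃ - 2ψ₁₃` and
`r²³ = N₂ + N₃ - 2ψ₂₃`, where `Nₖ` is `N` in the `k`-th tensor factor and `ψᵢⱼ` is `Ψ⁺` in the
`i`-th and `Ψ⁻` in the `j`-th factor. The `Nₖ` commute with each other and, by `[N, Ψ±] = ±Ψ±`,
act on `ψᵢⱼ` with weight `δₖᵢ - δₖⱼ`. Moreover `ψ₁₂` commutes with `ψ₁₃` and `ψ₁₃` with `ψ₂₃`
because `(Ψ±)² = 0`, while `[ψ₁₂, ψ₂₃] = ψ₁₃` because `{Ψ⁺, Ψ⁻} = E`. Expanding the Yang–Baxter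
expression with these relations, the terms linear in the `ψᵢⱼ` add up to `-4ψ₁₃` and the
quadratic ones to `4ψ₁₃`.
-/

namespace SuperMatrix

variable {R : Type*} [CommRing R]

def IsHomogeneous (X : Matrix (Fin 2) (Fin 2) R) (p : ℕ) : Prop :=
  ∀ i j, X i j ≠ 0 → (i : ℕ) ≡ j + p [MOD 2]

theorem isHomogeneous_one : IsHomogeneous (1 : Matrix (Fin 2) (Fin 2) R) 0 := by
  intro i j h
  obtain rfl : i = j := by
    by_contra hij
    exact h (Matrix.one_apply_ne hij)
  rfl

theorem IsHomogeneous.neg_one_pow_mul_apply {X : Matrix (Fin 2) (Fin 2) R} {p : ℕ}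
    (hX : IsHomogeneous X p) (b : ℕ) (i j : Fin 2) :
    (-1 : R) ^ (b * (i : ℕ)) * X i j = (-1) ^ (b * ((j : ℕ) + p)) * X i j := by
  by_cases h : X i j = 0
  · simp [h]
  · rw [neg_one_pow_eq_pow_mod_two, (hX i j h).mul_left b, ← neg_one_pow_eq_pow_mod_two]

/-- `X ⊗ Y ⊗ Z` on `(R^{1|1})^{⊗3}` for `Y`, `Z` of parities `b`, `c`: the Koszul sign comes from
moving `Y` past the first factor and `Z` past the first two. -/
def tensor3 (X Y Z : Matrix (Fin 2) (Fin 2) R) (b c : ℕ) :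
    Matrix (Fin 2 × Fin 2 × Fin 2) (Fin 2 × Fin 2 × Fin 2) R :=
  Matrix.of fun u v =>
    (-1) ^ (b * (v.1 : ℕ) + c * ((v.1 : ℕ) + (v.2.1 : ℕ))) *
      (X u.1 v.1 * (Y u.2.1 v.2.1 * Z u.2.2 v.2.2))

theorem tensor3_mul {X Y Z X' Y' Z' : Matrix (Fin 2) (Fin 2) R} {a' b' b c c' : ℕ}
    (hX' : IsHomogeneous X' a') (hY' : IsHomogeneous Y' b') :
    tensor3 X Y Z b c * tensor3 X' Y' Z' b' c' =
      (-1 : R) ^ (b * a' + c * (a' + b')) •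
        tensor3 (X * X') (Y * Y') (Z * Z') (b + b') (c + c') := by
  ext ⟨u₁, u₂, u₃⟩ ⟨v₁, v₂, v₃⟩
  have koszul (w₁ w₂ : Fin 2) :
      (-1 : R) ^ (b * (w₁ : ℕ) + c * ((w₁ : ℕ) + w₂)) * X' w₁ v₁ * Y' w₂ v₂ =
        (-1) ^ ((b + c) * ((v₁ : ℕ) + a') + c * ((v₂ : ℕ) + b')) * X' w₁ v₁ * Y' w₂ v₂ := by
    calc _ = ((-1) ^ ((b + c) * (w₁ : ℕ)) * X' w₁ v₁) * ((-1) ^ (c * (w₂ : ℕ)) * Y' w₂ v₂) := by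
          ring
      _ = _ := by
          rw [hX'.neg_one_pow_mul_apply, hY'.neg_one_pow_mul_apply]
          ring
  simp only [tensor3, Matrix.mul_apply, Matrix.of_apply, Matrix.smul_apply, smul_eq_mul,
    Fintype.sum_prod_type, Finset.sum_mul_sum]
  simp only [Finset.mul_sum]
  refine Finset.sum_congr rfl fun w₁ _ => Finset.sum_congr rfl fun w₂ _ =>
    Finset.sum_congr rfl fun w₃ _ => ?_
  linear_combination (X u₁ w₁ * Y u₂ w₂ * Z u₃ w₃ * Z' w₃ v₃ *
    (-1 : R) ^ (b' * (v₁ : ℕ) + c' * ((v₁ : ℕ) + v₂))) * koszul w₁ w₂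

section Derivation

variable {X Y Z A : Matrix (Fin 2) (Fin 2) R} {a b : ℕ} {s : R}

theorem lie_tensor3_left (hA : IsHomogeneous A 0) (hX : IsHomogeneous X a)
    (hY : IsHomogeneous Y b) (hAX : ⁅A, X⁆ = s • X) (c : ℕ) :
    ⁅tensor3 A 1 1 0 0, tensor3 X Y Z b c⁆ = s • tensor3 X Y Z b c := by
  rw [Ring.lie_def, tensor3_mul hX hY, tensor3_mul hA isHomogeneous_one]
  ext u v
  have h := congrFun₂ hAX u.1 v.1
  simp only [Ring.lie_def, Matrix.sub_apply, Matrix.smul_apply, smul_eq_mul] at h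
  simp only [tensor3, Matrix.sub_apply, Matrix.smul_apply, Matrix.of_apply, smul_eq_mul,
    Matrix.one_mul, Matrix.mul_one]
  linear_combination (-1 : R) ^ (b * (v.1 : ℕ) + c * ((v.1 : ℕ) + (v.2.1 : ℕ))) *
    Y u.2.1 v.2.1 * Z u.2.2 v.2.2 * h

theorem lie_tensor3_middle (hA : IsHomogeneous A 0) (hX : IsHomogeneous X a)
    (hY : IsHomogeneous Y b) (hAY : ⁅A, Y⁆ = s • Y) (c : ℕ) :
    ⁅tensor3 1 A 1 0 0, tensor3 X Y Z b c⁆ = s • tensor3 X Y Z b c := by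
  rw [Ring.lie_def, tensor3_mul hX hY, tensor3_mul isHomogeneous_one hA]
  ext u v
  have h := congrFun₂ hAY u.2.1 v.2.1
  simp only [Ring.lie_def, Matrix.sub_apply, Matrix.smul_apply, smul_eq_mul] at h
  simp only [tensor3, Matrix.sub_apply, Matrix.smul_apply, Matrix.of_apply, smul_eq_mul,
    Matrix.one_mul, Matrix.mul_one]
  linear_combination (-1 : R) ^ (b * (v.1 : ℕ) + c * ((v.1 : ℕ) + (v.2.1 : ℕ))) *
    X u.1 v.1 * Z u.2.2 v.2.2 * h

theorem lie_tensor3_right (hX : IsHomogeneous X a) (hY : IsHomogeneous Y b)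
    (hAZ : ⁅A, Z⁆ = s • Z) (c : ℕ) :
    ⁅tensor3 1 1 A 0 0, tensor3 X Y Z b c⁆ = s • tensor3 X Y Z b c := by
  rw [Ring.lie_def, tensor3_mul hX hY, tensor3_mul isHomogeneous_one isHomogeneous_one]
  ext u v
  have h := congrFun₂ hAZ u.2.2 v.2.2
  simp only [Ring.lie_def, Matrix.sub_apply, Matrix.smul_apply, smul_eq_mul] at h
  simp only [tensor3, Matrix.sub_apply, Matrix.smul_apply, Matrix.of_apply, smul_eq_mul,
    Matrix.one_mul, Matrix.mul_one]
  linear_combination (-1 : R) ^ (b * (v.1 : ℕ) + c * ((v.1 : ℕ) + (v.2.1 : ℕ))) *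
    X u.1 v.1 * Y u.2.1 v.2.1 * h

end Derivation

end SuperMatrix

theorem cybe_of_weights {R L : Type*} [CommRing R] [LieRing L] [LieAlgebra R L]
    (n : Fin 3 → L) (p₁₂ p₁₃ p₂₃ : L) (hn : ∀ i j, ⁅n i, n j⁆ = 0)
    (h₁₂ : ∀ i, ⁅n i, p₁₂⁆ = (![1, -1, 0] i : R) • p₁₂)
    (h₁₃ : ∀ i, ⁅n i, p₁₃⁆ = (![1, 0, -1] i : R) • p₁₃)
    (h₂₃ : ∀ i, ⁅n i, p₂₃⁆ = (![0, 1, -1] i : R) • p₂₃)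
    (hp₁₂₁₃ : ⁅p₁₂, p₁₃⁆ = 0) (hp₁₂₂₃ : ⁅p₁₂, p₂₃⁆ = p₁₃) (hp₁₃₂₃ : ⁅p₁₃, p₂₃⁆ = 0) :
    ⁅n 0 + n 1 - (2 : R) • p₁₂, n 0 + n 2 - (2 : R) • p₁₃⁆ +
      ⁅n 0 + n 1 - (2 : R) • p₁₂, n 1 + n 2 - (2 : R) • p₂₃⁆ +
      ⁅n 0 + n 2 - (2 : R) • p₁₃, n 1 + n 2 - (2 : R) • p₂₃⁆ = 0 := by
  have skew (x y : L) : ⁅x, y⁆ = -⁅y, x⁆ := (lie_skew x y).symm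
  simp only [lie_add, add_lie, lie_sub, sub_lie, lie_smul, smul_lie, hn, h₁₂, h₁₃, h₂₃,
    skew p₁₂ (n _), skew p₁₃ (n _), hp₁₂₁₃, hp₁₂₂₃, hp₁₃₂₃,
    Matrix.cons_val_zero, Matrix.cons_val_one, Matrix.cons_val]
  module

attribute [local instance] LieRing.ofAssociativeRing

namespace Gl11

open SuperMatrix

abbrev Op3 := Matrix (Fin 2 × Fin 2 × Fin 2) (Fin 2 × Fin 2 × Fin 2) ℝ

theorem Em_eq_one : Em = 1 := Matrix.one_fin_two.symm

theorem isHomogeneous_Nm : IsHomogeneous Nm 0 := by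
  intro i j h
  fin_cases i <;> fin_cases j <;> first | rfl | simp [Nm] at h

theorem isHomogeneous_Pp : IsHomogeneous Pp 1 := by
  intro i j h
  fin_cases i <;> fin_cases j <;> first | rfl | simp [Pp] at h

theorem isHomogeneous_Pm : IsHomogeneous Pm 1 := by
  intro i j h
  fin_cases i <;> fin_cases j <;> first | rfl | simp [Pm] at h

theorem lie_Nm_Pp : ⁅Nm, Pp⁆ = (1 : ℝ) • Pp := by
  ext i j
  fin_cases i <;> fin_cases j <;> norm_num [Ring.lie_def, Nm, Pp]

theorem lie_Nm_Pm : ⁅Nm, Pm⁆ = (-1 : ℝ) • Pm := by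
  ext i j
  fin_cases i <;> fin_cases j <;> norm_num [Ring.lie_def, Nm, Pm]

theorem lie_Nm_one : ⁅Nm, 1⁆ = (0 : ℝ) • (1 : Matrix (Fin 2) (Fin 2) ℝ) := by
  simp [Ring.lie_def]

theorem lie_Nm_Nm : ⁅Nm, Nm⁆ = (0 : ℝ) • Nm := by
  rw [lie_self, zero_smul]

theorem Pp_mul_Pp : Pp * Pp = 0 := by
  ext i j
  fin_cases i <;> fin_cases j <;> simp [Pp]

theorem Pm_mul_Pm : Pm * Pm = 0 := by
  ext i j
  fin_cases i <;> fin_cases j <;> simp [Pm]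

theorem Pm_mul_Pp_add_Pp_mul_Pm : Pm * Pp + Pp * Pm = 1 := by
  ext i j
  fin_cases i <;> fin_cases j <;> simp [Pp, Pm]

theorem leg12_eq_tensor3 (X Y : Matrix (Fin 2) (Fin 2) ℝ) (q : ℕ) :
    leg12 X Y q = tensor3 X Y 1 q 0 := by
  ext u v
  simp [leg12, tensor3, Matrix.one_apply, mul_assoc]

theorem leg13_eq_tensor3 (X Y : Matrix (Fin 2) (Fin 2) ℝ) (q : ℕ) :
    leg13 X Y q = tensor3 X 1 Y 0 q := by
  ext u v
  simp [leg13, tensor3, Matrix.one_apply, mul_assoc]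

theorem leg23_eq_tensor3 (X Y : Matrix (Fin 2) (Fin 2) ℝ) (p q : ℕ) :
    leg23 X Y p q = tensor3 1 X Y p q := by
  ext u v
  simp [leg23, tensor3, Matrix.one_apply, mul_assoc]

def nLeg : Fin 3 → Op3 := ![tensor3 Nm 1 1 0 0, tensor3 1 Nm 1 0 0, tensor3 1 1 Nm 0 0]

def psi₁₂ : Op3 := tensor3 Pp Pm 1 1 0
def psi₁₃ : Op3 := tensor3 Pp 1 Pm 0 1
def psi₂₃ : Op3 := tensor3 1 Pp Pm 1 1

theorem r12_eq : r12 = nLeg 0 + nLeg 1 - (2 : ℝ) • psi₁₂ := by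
  rw [r12, leg12_eq_tensor3, leg12_eq_tensor3, leg12_eq_tensor3, Em_eq_one, add_comm]
  rfl

theorem r13_eq : r13 = nLeg 0 + nLeg 2 - (2 : ℝ) • psi₁₃ := by
  rw [r13, leg13_eq_tensor3, leg13_eq_tensor3, leg13_eq_tensor3, Em_eq_one, add_comm]
  rfl

theorem r23_eq : r23 = nLeg 1 + nLeg 2 - (2 : ℝ) • psi₂₃ := by
  rw [r23, leg23_eq_tensor3, leg23_eq_tensor3, leg23_eq_tensor3, Em_eq_one, add_comm]
  rfl

theorem lie_nLeg_tensor3 {X Y Z : Matrix (Fin 2) (Fin 2) ℝ} {a b : ℕ} {wX wY wZ : ℝ}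
    (hX : IsHomogeneous X a) (hY : IsHomogeneous Y b) (hwX : ⁅Nm, X⁆ = wX • X)
    (hwY : ⁅Nm, Y⁆ = wY • Y) (hwZ : ⁅Nm, Z⁆ = wZ • Z) (c : ℕ) (i : Fin 3) :
    ⁅nLeg i, tensor3 X Y Z b c⁆ = ![wX, wY, wZ] i • tensor3 X Y Z b c := by
  fin_cases i
  · exact lie_tensor3_left isHomogeneous_Nm hX hY hwX c
  · exact lie_tensor3_middle isHomogeneous_Nm hX hY hwY c
  · exact lie_tensor3_right hX hY hwZ c

theorem lie_nLeg_nLeg (i j : Fin 3) : ⁅nLeg i, nLeg j⁆ = 0 := by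
  have zero_weight (T : Op3) : (![0, 0, 0] i : ℝ) • T = 0 := by
    fin_cases i <;> exact zero_smul ℝ T
  fin_cases j
  · exact (lie_nLeg_tensor3 isHomogeneous_Nm isHomogeneous_one lie_Nm_Nm lie_Nm_one lie_Nm_one
      0 i).trans (zero_weight _)
  · exact (lie_nLeg_tensor3 isHomogeneous_one isHomogeneous_Nm lie_Nm_one lie_Nm_Nm lie_Nm_one
      0 i).trans (zero_weight _)
  · exact (lie_nLeg_tensor3 isHomogeneous_one isHomogeneous_one lie_Nm_one lie_Nm_one lie_Nm_Nm
      0 i).trans (zero_weight _)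

theorem lie_nLeg_psi₁₂ (i : Fin 3) : ⁅nLeg i, psi₁₂⁆ = (![1, -1, 0] i : ℝ) • psi₁₂ :=
  lie_nLeg_tensor3 isHomogeneous_Pp isHomogeneous_Pm lie_Nm_Pp lie_Nm_Pm lie_Nm_one 0 i

theorem lie_nLeg_psi₁₃ (i : Fin 3) : ⁅nLeg i, psi₁₃⁆ = (![1, 0, -1] i : ℝ) • psi₁₃ :=
  lie_nLeg_tensor3 isHomogeneous_Pp isHomogeneous_one lie_Nm_Pp lie_Nm_one lie_Nm_Pm 1 i

theorem lie_nLeg_psi₂₃ (i : Fin 3) : ⁅nLeg i, psi₂₃⁆ = (![0, 1, -1] i : ℝ) • psi₂₃ :=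
  lie_nLeg_tensor3 isHomogeneous_one isHomogeneous_Pp lie_Nm_one lie_Nm_Pp lie_Nm_Pm 1 i

theorem lie_psi₁₂_psi₁₃ : ⁅psi₁₂, psi₁₃⁆ = 0 := by
  rw [Ring.lie_def, psi₁₂, psi₁₃, tensor3_mul isHomogeneous_Pp isHomogeneous_one,
    tensor3_mul isHomogeneous_Pp isHomogeneous_Pm, Pp_mul_Pp]
  ext u v
  simp [tensor3]

theorem lie_psi₁₃_psi₂₃ : ⁅psi₁₃, psi₂₃⁆ = 0 := by
  rw [Ring.lie_def, psi₁₃, psi₂₃, tensor3_mul isHomogeneous_one isHomogeneous_Pp,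
    tensor3_mul isHomogeneous_Pp isHomogeneous_one, Pm_mul_Pm]
  ext u v
  simp [tensor3]

theorem lie_psi₁₂_psi₂₃ : ⁅psi₁₂, psi₂₃⁆ = psi₁₃ := by
  rw [Ring.lie_def, psi₁₂, psi₂₃, psi₁₃, tensor3_mul isHomogeneous_one isHomogeneous_Pp,
    tensor3_mul isHomogeneous_Pp isHomogeneous_Pm]
  ext u v
  have h := congrFun₂ Pm_mul_Pp_add_Pp_mul_Pm u.2.1 v.2.1
  rw [Matrix.add_apply] at h
  simp only [tensor3, Matrix.smul_of, Matrix.sub_apply, Matrix.of_apply, Pi.smul_apply,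
    smul_eq_mul, mul_zero, zero_add, mul_one, add_zero, pow_zero, Nat.reduceAdd, one_mul, zero_mul,
    pow_add, pow_mul, even_two, Even.neg_pow, one_pow, one_smul]
  linear_combination Pp u.1 v.1 * Pm u.2.2 v.2.2 * (-1 : ℝ) ^ (v.1 : ℕ) *
    (-1 : ℝ) ^ (v.2.1 : ℕ) * h

end Gl11

/-- the element `r = E⊗N + N⊗E - 2Ψ⁺⊗Ψ⁻` satisfies the
classical Yang–Baxter equation `[r¹²,r¹³] + [r¹²,r²³] + [r¹³,r²³] = 0`
(verified in the threefold tensor power of the defining representation,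
with Koszul signs; since `r` is even, the brackets are ordinary commutators). -/
theorem gl11_CYBE :
    (r12 * r13 - r13 * r12) + (r12 * r23 - r23 * r12) +
      (r13 * r23 - r23 * r13) = 0 := by
  simp only [← Ring.lie_def, Gl11.r12_eq, Gl11.r13_eq, Gl11.r23_eq]
  exact cybe_of_weights _ _ _ _ Gl11.lie_nLeg_nLeg
    Gl11.lie_nLeg_psi₁₂ Gl11.lie_nLeg_psi₁₃ Gl11.lie_nLeg_psi₂₃
    Gl11.lie_psi₁₂_psi₁₃ Gl11.lie_psi₁₂_psi₂₃ Gl11.lie_psi₁₃_psi₂₃
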